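/- arXiv:2204.02519 — 4 statements merged into one kernel-verified Lean document; each statement's English description precedes it below -/
import Mathlib

section
/- In the meta-algorithm for expander decomposition, each vertex v can be on the smaller-volume side of a chosen sparse cut at most O(log m) times: if a vertex belongs to cluster X and the cut (S, X\S) with vol_{G[X]}(S) ≤ vol_{G[X]}(X\S) puts v in S, then the number of edges of the cluster containing v at most halves. Consequently over the whole run of the meta-algorithm, the total number of edges added to E_Rest is at most O(φ·m·log m). -/
open Finset

variable {V : Type*} [Fintype V] [DecidableEq V]

/-- Degree of a vertex in the multigraph `G` (a self-loop counts twice). -/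
def deg (G : Multiset (V × V)) (v : V) : ℕ :=
  (G.filter (fun e => e.1 = v)).card + (G.filter (fun e => e.2 = v)).card

/-- Degree of `v` in the subgraph of `G` induced by the vertex set `X`. -/
def degIn (G : Multiset (V × V)) (X : Finset V) (v : V) : ℕ :=
  deg (G.filter (fun e => e.1 ∈ X ∧ e.2 ∈ X)) v

/-- Volume of `S` in the subgraph of `G` induced by `X`. -/
def volIn (G : Multiset (V × V)) (X S : Finset V) : ℕ := ∑ v ∈ S, degIn G X v

/-- The potential of a single cluster: `n * log₂ n` for its volume `n`. -/
def pot (n : ℕ) : ℕ := n * Nat.log 2 n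

lemma pot_mono {a b : ℕ} (h : a ≤ b) : pot a ≤ pot b :=
  Nat.mul_le_mul h (Nat.log_mono_right h)

/-- Key numerical inequality for the halving argument. -/
lemma key_ineq (s t s' t' : ℕ) (hst : s ≤ t) (hs' : s' ≤ s) (ht' : t' ≤ t) :
    pot s' + pot t' + s ≤ pot (s + t) := by
  rcases Nat.eq_zero_or_pos s with hs | hs
  · subst hs
    have hs'0 : s' = 0 := Nat.le_zero.mp hs'
    subst hs'0
    simpa [pot] using pot_mono (show t' ≤ 0 + t by omega)
  · have hx2 : 2 ≤ s + t := by omega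
    have hL : 1 ≤ Nat.log 2 (s + t) := Nat.log_pos one_lt_two hx2
    obtain ⟨c, hc⟩ : ∃ c, Nat.log 2 (s + t) = c + 1 := ⟨Nat.log 2 (s + t) - 1, by omega⟩
    have h1 : pot s' ≤ s * c := by
      rcases Nat.eq_zero_or_pos s' with h0 | h0
      · simp [pot, h0]
      · have hhalf : s' ≤ (s + t) / 2 := by omega
        have : Nat.log 2 s' ≤ Nat.log 2 ((s + t) / 2) := Nat.log_mono_right hhalf
        rw [Nat.log_div_base, hc] at this
        exact Nat.mul_le_mul hs' (by omega)
    have h2 : pot t' ≤ t * (c + 1) := by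
      have : Nat.log 2 t' ≤ Nat.log 2 (s + t) := Nat.log_mono_right (by omega)
      exact Nat.mul_le_mul (le_trans ht' (by omega)) (by omega)
    calc pot s' + pot t' + s ≤ s * c + t * (c + 1) + s := by omega
      _ = (s + t) * (c + 1) := by ring
      _ = pot (s + t) := by rw [pot, hc]

lemma degIn_mono (G : Multiset (V × V)) {S X : Finset V} (h : S ⊆ X) (v : V) :
    degIn G S v ≤ degIn G X v := by
  have hfil : G.filter (fun e => e.1 ∈ S ∧ e.2 ∈ S) ≤ G.filter (fun e => e.1 ∈ X ∧ e.2 ∈ X) :=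
    Multiset.monotone_filter_right G (fun e he => ⟨h he.1, h he.2⟩)
  exact Nat.add_le_add
    (Multiset.card_le_card (Multiset.filter_le_filter _ hfil))
    (Multiset.card_le_card (Multiset.filter_le_filter _ hfil))

lemma volIn_mono (G : Multiset (V × V)) {S X : Finset V} (h : S ⊆ X) (T : Finset V) :
    volIn G S T ≤ volIn G X T :=
  Finset.sum_le_sum fun v _ => degIn_mono G h v

lemma volIn_split (G : Multiset (V × V)) {S X : Finset V} (h : S ⊆ X) :
    volIn G X S + volIn G X (X \ S) = volIn G X X := by
  rw [volIn, volIn, volIn, add_comm]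
  exact Finset.sum_sdiff h

lemma sum_card_filter_fst (G : Multiset (V × V)) :
    ∑ v : V, (G.filter (fun e => e.1 = v)).card = Multiset.card G := by
  induction G using Multiset.induction_on with
  | empty => simp
  | cons a s ih =>
    simp only [Multiset.filter_cons, Multiset.card_add, Finset.sum_add_distrib, ih,
      Multiset.card_cons]
    rw [add_comm]
    congr 1
    rw [Finset.sum_eq_single a.1]
    · simp
    · intro b _ hb
      simp [Ne.symm hb]
    · simp

lemma sum_card_filter_snd (G : Multiset (V × V)) :
    ∑ v : V, (G.filter (fun e => e.2 = v)).card = Multiset.card G := by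
  induction G using Multiset.induction_on with
  | empty => simp
  | cons a s ih =>
    simp only [Multiset.filter_cons, Multiset.card_add, Finset.sum_add_distrib, ih,
      Multiset.card_cons]
    rw [add_comm]
    congr 1
    rw [Finset.sum_eq_single a.2]
    · simp
    · intro b _ hb
      simp [Ne.symm hb]
    · simp

lemma volIn_univ (G : Multiset (V × V)) :
    volIn G Finset.univ Finset.univ = 2 * Multiset.card G := by
  have hfil : G.filter (fun e : V × V => e.1 ∈ (Finset.univ : Finset V) ∧ e.2 ∈ Finset.univ) = G :=
    Multiset.filter_eq_self.mpr fun a _ => ⟨Finset.mem_univ _, Finset.mem_univ _⟩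
  simp only [volIn, degIn, deg, hfil, Finset.sum_add_distrib, sum_card_filter_fst,
    sum_card_filter_snd]
  ring

lemma sum_insert_le' {α : Type*} [DecidableEq α] (f : α → ℕ) (a : α) (s : Finset α) :
    ∑ x ∈ insert a s, f x ≤ f a + ∑ x ∈ s, f x := by
  by_cases h : a ∈ s
  · rw [Finset.insert_eq_self.mpr h]; exact Nat.le_add_left _ _
  · rw [Finset.sum_insert h]

/-- In the meta-algorithm, each split of a cluster `X` along a sparse cut `(S, X \ S)` with
`vol_{G[X]}(S) ≤ vol_{G[X]}(X \ S)` adds at most `φ · vol_{G[X]}(S)` edges to `E_Rest`.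
Since a vertex can be on the smaller-volume side only `O(log m)` many times (the volume of its
cluster at least halves each time), the total number of edges ever added to `E_Rest` is at most
`φ · 2m · log₂(2m)`. -/
theorem stmt2 (G : Multiset (V × V)) (m : ℕ) (hm : Multiset.card G = m)
    (φ : ℝ) (hφ : 0 ≤ φ) (k : ℕ)
    (P : ℕ → Finset (Finset V)) (X S : ℕ → Finset V) (cost : ℕ → ℝ)
    (hP0 : P 0 = {Finset.univ})
    (hstep : ∀ i < k, X i ∈ P i ∧ S i ⊆ X i ∧ (S i).Nonempty ∧ (X i \ S i).Nonempty ∧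
      volIn G (X i) (S i) ≤ volIn G (X i) (X i \ S i) ∧
      P (i + 1) = insert (S i) (insert (X i \ S i) ((P i).erase (X i))) ∧
      cost i ≤ φ * (volIn G (X i) (S i) : ℝ)) :
    (∑ i ∈ Finset.range k, cost i) ≤ φ * (2 * m) * (Nat.log 2 (2 * m) : ℝ) := by
  set Φ : ℕ → ℕ := fun i => ∑ C ∈ P i, pot (volIn G C C) with hΦ
  have hΦdef : ∀ j, Φ j = ∑ C ∈ P j, pot (volIn G C C) := fun _ => rfl
  -- one step of the potential argument
  have hstep' : ∀ i < k, Φ (i + 1) + volIn G (X i) (S i) ≤ Φ i := by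
    intro i hi
    obtain ⟨hX, hsub, _, _, hvol, hPsucc, _⟩ := hstep i hi
    have herase : Φ i = pot (volIn G (X i) (X i)) +
        ∑ C ∈ (P i).erase (X i), pot (volIn G C C) :=
      (Finset.add_sum_erase _ _ hX).symm
    have hle : Φ (i + 1) ≤ pot (volIn G (S i) (S i)) + (pot (volIn G (X i \ S i) (X i \ S i)) +
        ∑ C ∈ (P i).erase (X i), pot (volIn G C C)) := by
      rw [hΦdef (i + 1), hPsucc]
      exact le_trans (sum_insert_le' _ _ _)
        (Nat.add_le_add_left (sum_insert_le' _ _ _) _)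
    have hkey : pot (volIn G (S i) (S i)) + pot (volIn G (X i \ S i) (X i \ S i)) +
        volIn G (X i) (S i) ≤ pot (volIn G (X i) (X i)) := by
      have h1 : volIn G (S i) (S i) ≤ volIn G (X i) (S i) := volIn_mono G hsub _
      have h2 : volIn G (X i \ S i) (X i \ S i) ≤ volIn G (X i) (X i \ S i) :=
        volIn_mono G Finset.sdiff_subset _
      have h3 := volIn_split G hsub
      calc pot (volIn G (S i) (S i)) + pot (volIn G (X i \ S i) (X i \ S i)) +
            volIn G (X i) (S i)
          ≤ pot (volIn G (X i) (S i) + volIn G (X i) (X i \ S i)) :=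
            key_ineq _ _ _ _ hvol h1 h2
        _ = pot (volIn G (X i) (X i)) := by rw [h3]
    omega
  -- telescoping
  have htel : ∀ j ≤ k, ∑ i ∈ Finset.range j, volIn G (X i) (S i) + Φ j ≤ Φ 0 := by
    intro j hj
    induction j with
    | zero => simp
    | succ n ih =>
      have hn : n < k := hj
      have := hstep' n hn
      have := ih (le_of_lt hn)
      rw [Finset.sum_range_succ]
      omega
  have hΦ0 : Φ 0 = 2 * m * Nat.log 2 (2 * m) := by
    rw [hΦdef 0, hP0, Finset.sum_singleton, volIn_univ, hm, pot]
  have hsum : ∑ i ∈ Finset.range k, volIn G (X i) (S i) ≤ 2 * m * Nat.log 2 (2 * m) := by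
    have := htel k le_rfl
    omega
  calc ∑ i ∈ Finset.range k, cost i
      ≤ ∑ i ∈ Finset.range k, φ * (volIn G (X i) (S i) : ℝ) :=
        Finset.sum_le_sum fun i hi => (hstep i (Finset.mem_range.mp hi)).2.2.2.2.2.2
    _ = φ * ((∑ i ∈ Finset.range k, volIn G (X i) (S i) : ℕ) : ℝ) := by
        rw [← Finset.mul_sum, Nat.cast_sum]
    _ ≤ φ * ((2 * m * Nat.log 2 (2 * m) : ℕ) : ℝ) := by
        apply mul_le_mul_of_nonneg_left _ hφ
        exact_mod_cast hsum
    _ = φ * (2 * m) * (Nat.log 2 (2 * m) : ℝ) := by push_cast; ring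
end

section
/- Let G be a directed multigraph and suppose there exists a (R, φ, ψ)-witness W (with respect to some weight vector γ) of the pair (G, 0), where 0 is the all-zero vector. Then G is a ψ²φ-expander: for every cut (S, S̄) with vol_G(S) ≤ vol_G(S̄), both |E_G(S,S̄)| ≥ ψ²φ·vol_G(S) and |E_G(S̄,S)| ≥ ψ²φ·vol_G(S). -/
open Finset

variable {V : Type*} [Fintype V] [DecidableEq V]

/-- Degree of `v` in a multigraph given by an edge type with tail and head maps
(a self-loop counts twice). -/
def degF {E : Type*} [Fintype E] (t h : E → V) (v : V) : ℕ :=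
  (univ.filter (fun e => t e = v)).card + (univ.filter (fun e => h e = v)).card

/-- Volume of a vertex set. -/
def volF {E : Type*} [Fintype E] (t h : E → V) (S : Finset V) : ℕ := ∑ v ∈ S, degF t h v

/-- Number of edges with tail in `S` and head not in `S`. -/
def cutF {E : Type*} [Fintype E] (t h : E → V) (S : Finset V) : ℕ :=
  (univ.filter (fun e => t e ∈ S ∧ h e ∉ S)).card

/-- `IsWalk t h u v l` : the list of edges `l` forms a walk from `u` to `v`. -/
def IsWalk {E : Type*} (t h : E → V) : V → V → List E → Prop
  | u, v, [] => u = v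
  | u, v, e :: es => t e = u ∧ IsWalk t h (h e) v es

/-!
Every edge of `W` crossing a cut is embedded as a walk that crosses the same cut in `G`, and each
edge of `G` carries at most `1/(ψφ)` such walks, so `ψφ · |E_W(S,S̄)| ≤ |E_G(S,S̄)|`. The witness
expands with constant `ψ` on whichever side of the cut is `γ`-lighter; using the reversed witness
on the complement, `|E_W(S,S̄)| ≥ ψ · min(vol_W S, vol_W S̄) ≥ ψ · vol_G S`, because
`deg_G ≤ deg_W` and `vol_G S ≤ vol_G S̄`. The direction `S̄ → S` is the same argument applied to
the reversed graphs.
-/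

section Multigraph

variable {V : Type*} [DecidableEq V] {E : Type*} [Fintype E]

lemma degF_comm (t h : E → V) (v : V) : degF h t v = degF t h v := add_comm _ _

lemma volF_comm (t h : E → V) (S : Finset V) : volF h t S = volF t h S := by
  simp only [volF, degF_comm]

lemma volF_mono_of_degF_le {F : Type*} [Fintype F] {t h : E → V} {t' h' : F → V}
    (hd : ∀ v, degF t h v ≤ degF t' h' v) (S : Finset V) : volF t h S ≤ volF t' h' S :=
  sum_le_sum fun v _ => hd v

lemma cutF_compl [Fintype V] (t h : E → V) (S : Finset V) : cutF t h Sᶜ = cutF h t S := by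
  simp only [cutF, mem_compl, not_not]
  congr 1
  exact filter_congr fun _ _ => and_comm

end Multigraph

lemma IsWalk.exists_mem_cut {V E : Type*} {t h : E → V} (S : Finset V) :
    ∀ {l : List E} {u v : V}, IsWalk t h u v l → u ∈ S → v ∉ S → ∃ e ∈ l, t e ∈ S ∧ h e ∉ S
  | [], _, _, huv, hu, hv => absurd ((huv : _ = _) ▸ hu) hv
  | e :: _, _, _, ⟨hte, hw⟩, hu, hv => by
    by_cases he : h e ∈ S
    · obtain ⟨e', he', hcross⟩ := hw.exists_mem_cut S he hv
      exact ⟨e', List.mem_cons_of_mem _ he', hcross⟩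
    · exact ⟨e, List.mem_cons_self, hte ▸ hu, he⟩

lemma cutF_le_mul_cutF_of_embedding {V EG EW : Type*} [DecidableEq V] [Fintype EG] [Fintype EW]
    [DecidableEq EG] {gt gh : EG → V} {wt wh : EW → V} {Emb : EW → List EG}
    (hemb : ∀ e, IsWalk gt gh (wt e) (wh e) (Emb e)) {c : ℝ}
    (hcong : ∀ e : EG, ((univ.filter fun e' => e ∈ Emb e').card : ℝ) ≤ c) (S : Finset V) :
    (cutF wt wh S : ℝ) ≤ c * cutF gt gh S := by
  classical
  have hcover : (univ.filter fun e' => wt e' ∈ S ∧ wh e' ∉ S) ⊆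
      (univ.filter fun e => gt e ∈ S ∧ gh e ∉ S).biUnion
        fun e => univ.filter fun e' => e ∈ Emb e' := by
    intro e' he'
    simp only [mem_filter, mem_univ, true_and] at he'
    obtain ⟨e, he, hcross⟩ := (hemb e').exists_mem_cut S he'.1 he'.2
    simp only [mem_biUnion, mem_filter, mem_univ, true_and]
    exact ⟨e, hcross, he⟩
  calc (cutF wt wh S : ℝ)
      ≤ ∑ e ∈ univ.filter (fun e => gt e ∈ S ∧ gh e ∉ S),
          ((univ.filter fun e' => e ∈ Emb e').card : ℝ) := by
        exact_mod_cast (card_le_card hcover).trans card_biUnion_le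
    _ ≤ ∑ _e ∈ univ.filter (fun e => gt e ∈ S ∧ gh e ∉ S), c := sum_le_sum fun e _ => hcong e
    _ = c * cutF gt gh S := by rw [sum_const, nsmul_eq_mul, cutF, mul_comm]

lemma mul_min_volF_le_cutF {E : Type*} [Fintype E] {t h : E → V} (γ : V → ℕ) {ψ : ℝ}
    (hψ : 0 ≤ ψ)
    (hcut : ∀ S : Finset V, ∑ v ∈ S, γ v ≤ ∑ v ∈ Sᶜ, γ v → ψ * (volF t h S : ℝ) ≤ cutF t h S)
    (hcutRev : ∀ S : Finset V, ∑ v ∈ S, γ v ≤ ∑ v ∈ Sᶜ, γ v → ψ * (volF t h S : ℝ) ≤ cutF h t S)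
    (S : Finset V) : ψ * min (volF t h S : ℝ) (volF t h Sᶜ) ≤ cutF t h S := by
  rcases le_total (∑ v ∈ S, γ v) (∑ v ∈ Sᶜ, γ v) with hγ | hγ
  · exact (mul_le_mul_of_nonneg_left (min_le_left _ _) hψ).trans (hcut S hγ)
  · have hγ' : ∑ v ∈ Sᶜ, γ v ≤ ∑ v ∈ Sᶜᶜ, γ v := by rwa [compl_compl]
    calc ψ * min (volF t h S : ℝ) (volF t h Sᶜ)
        ≤ ψ * volF t h Sᶜ := mul_le_mul_of_nonneg_left (min_le_right _ _) hψ
      _ ≤ cutF t h S := cutF_compl h t S ▸ hcutRev Sᶜ hγ'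

lemma sq_mul_mul_volF_le_cutF_of_witness {EG EW : Type*} [Fintype EG] [Fintype EW]
    [DecidableEq EG] {gt gh : EG → V} {wt wh : EW → V} (γ : V → ℕ) {φ ψ : ℝ}
    (hφ : 0 < φ) (hψ : 0 < ψ) {Emb : EW → List EG}
    (hemb : ∀ e, IsWalk gt gh (wt e) (wh e) (Emb e))
    (hcong : ∀ e : EG, ((univ.filter fun e' => e ∈ Emb e').card : ℝ) ≤ 1 / (ψ * φ))
    (hdeg : ∀ v, degF gt gh v ≤ degF wt wh v)
    (hcut : ∀ S : Finset V, ∑ v ∈ S, γ v ≤ ∑ v ∈ Sᶜ, γ v → ψ * (volF wt wh S : ℝ) ≤ cutF wt wh S)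
    (hcutRev : ∀ S : Finset V, ∑ v ∈ S, γ v ≤ ∑ v ∈ Sᶜ, γ v →
      ψ * (volF wt wh S : ℝ) ≤ cutF wh wt S)
    {S : Finset V} (hvol : volF gt gh S ≤ volF gt gh Sᶜ) :
    ψ ^ 2 * φ * (volF gt gh S : ℝ) ≤ cutF gt gh S := by
  have hmin : (volF gt gh S : ℝ) ≤ min (volF wt wh S : ℝ) (volF wt wh Sᶜ) := by
    refine le_min ?_ ?_ <;> norm_cast
    · exact volF_mono_of_degF_le hdeg S
    · exact hvol.trans (volF_mono_of_degF_le hdeg Sᶜ)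
  calc ψ ^ 2 * φ * (volF gt gh S : ℝ)
      = ψ * φ * (ψ * volF gt gh S) := by ring
    _ ≤ ψ * φ * (ψ * min (volF wt wh S : ℝ) (volF wt wh Sᶜ)) := by gcongr
    _ ≤ ψ * φ * cutF wt wh S := by gcongr; exact mul_min_volF_le_cutF γ hψ.le hcut hcutRev S
    _ ≤ ψ * φ * (1 / (ψ * φ) * cutF gt gh S) := by
        gcongr; exact cutF_le_mul_cutF_of_embedding hemb hcong S
    _ = cutF gt gh S := by field_simp

theorem stmt3_general {EG EW : Type*} [Fintype EG] [Fintype EW] [DecidableEq EG]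
    (gt gh : EG → V) (wt wh : EW → V) (γ : V → ℕ)
    (φ ψ : ℝ) (hφ0 : 0 < φ) (hψ0 : 0 < ψ)
    (Emb EmbRev : EW → List EG)
    (hemb : ∀ e, IsWalk gt gh (wt e) (wh e) (Emb e))
    (hembRev : ∀ e, IsWalk gh gt (wh e) (wt e) (EmbRev e))
    (hcong : ∀ e : EG, ((univ.filter (fun e' => e ∈ Emb e')).card : ℝ) ≤ 1 / (ψ * φ))
    (hcongRev : ∀ e : EG, ((univ.filter (fun e' => e ∈ EmbRev e')).card : ℝ) ≤ 1 / (ψ * φ))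
    (hdeg : ∀ v, degF gt gh v ≤ degF wt wh v ∧ ((degF wt wh v : ℝ)) ≤ (degF gt gh v : ℝ) / ψ)
    (hcut : ∀ S : Finset V, (∑ v ∈ S, γ v) ≤ (∑ v ∈ Sᶜ, γ v) →
      ψ * (volF wt wh S : ℝ) ≤ (cutF wt wh S : ℝ))
    (hcutRev : ∀ S : Finset V, (∑ v ∈ S, γ v) ≤ (∑ v ∈ Sᶜ, γ v) →
      ψ * (volF wt wh S : ℝ) ≤ (cutF wh wt S : ℝ)) :
    ∀ S : Finset V, volF gt gh S ≤ volF gt gh Sᶜ →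
      ψ ^ 2 * φ * (volF gt gh S : ℝ) ≤ (cutF gt gh S : ℝ) ∧
      ψ ^ 2 * φ * (volF gt gh S : ℝ) ≤ (cutF gh gt S : ℝ) := by
  intro S hvol
  have hdegRev v : degF gh gt v ≤ degF wh wt v := by
    simpa only [degF_comm] using (hdeg v).1
  refine ⟨sq_mul_mul_volF_le_cutF_of_witness γ hφ0 hψ0 hemb hcong (fun v => (hdeg v).1)
    hcut hcutRev hvol, ?_⟩
  have hRev := sq_mul_mul_volF_le_cutF_of_witness γ hφ0 hψ0 hembRev hcongRev hdegRev
    (fun T hT => volF_comm wt wh T ▸ hcutRev T hT) (fun T hT => volF_comm wt wh T ▸ hcut T hT)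
    (S := S) (by rwa [volF_comm gt gh, volF_comm gt gh])
  rwa [volF_comm gt gh] at hRev

/-- If `(G, 0)` admits an `(R, φ, ψ)`-witness `W` (with respect to an arbitrary weight vector
`γ`): `W` embeds into `G` with congestion `1/(ψφ)` in both directions, `deg_G ≤ deg_W ≤ deg_G/ψ`,
and all `γ`-oriented cuts of `W` are `ψ`-expanding in both directions — then `G` is a
`ψ²φ`-expander: every cut `(S, S̄)` with `vol_G(S) ≤ vol_G(S̄)` has at least `ψ²φ · vol_G(S)`
edges crossing in each direction. -/
theorem stmt3 {EG EW : Type*} [Fintype EG] [Fintype EW] [DecidableEq EG]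
    (gt gh : EG → V) (wt wh : EW → V) (γ : V → ℕ)
    (φ ψ : ℝ) (hφ0 : 0 < φ) (hφ1 : φ < 1) (hψ0 : 0 < ψ) (hψ1 : ψ < 1)
    (R : ℝ) (hR : 0 ≤ R)
    (Emb EmbRev : EW → List EG)
    (hemb : ∀ e, IsWalk gt gh (wt e) (wh e) (Emb e))
    (hembRev : ∀ e, IsWalk gh gt (wh e) (wt e) (EmbRev e))
    (hcong : ∀ e : EG, ((univ.filter (fun e' => e ∈ Emb e')).card : ℝ) ≤ 1 / (ψ * φ))
    (hcongRev : ∀ e : EG, ((univ.filter (fun e' => e ∈ EmbRev e')).card : ℝ) ≤ 1 / (ψ * φ))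
    (hdeg : ∀ v, degF gt gh v ≤ degF wt wh v ∧ ((degF wt wh v : ℝ)) ≤ (degF gt gh v : ℝ) / ψ)
    (hcut : ∀ S : Finset V, (∑ v ∈ S, γ v) ≤ (∑ v ∈ Sᶜ, γ v) →
      ψ * (volF wt wh S : ℝ) ≤ (cutF wt wh S : ℝ))
    (hcutRev : ∀ S : Finset V, (∑ v ∈ S, γ v) ≤ (∑ v ∈ Sᶜ, γ v) →
      ψ * (volF wt wh S : ℝ) ≤ (cutF wh wt S : ℝ)) :
    ∀ S : Finset V, volF gt gh S ≤ volF gt gh Sᶜ →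
      ψ ^ 2 * φ * (volF gt gh S : ℝ) ≤ (cutF gt gh S : ℝ) ∧
      ψ ^ 2 * φ * (volF gt gh S : ℝ) ≤ (cutF gh gt S : ℝ) :=
  stmt3_general gt gh wt wh γ φ ψ hφ0 hψ0 Emb EmbRev hemb hembRev hcong hcongRev hdeg hcut hcutRev
end

section
/- In the witness-repair step (second case): suppose |E_W(S,S̄)| + r(S) ≥ ψ(vol_W(S)+r(S)), r'(S) > (1/2)r(S), and vol_W(S) + r(S) ≥ (ψ/3)(vol_{W'}(S) + r'(S)). Then |E_{W'}(S,S̄)| + r'(S) ≥ (ψ²/6)(vol_{W'}(S) + r'(S)), where W' ⊇ W. -/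
open Finset

variable {V : Type*} [Fintype V] [DecidableEq V]

/-- Number of edges of the multigraph `G` with tail in `S` and head outside `S`. -/
def cutE (G : Multiset (V × V)) (S : Finset V) : ℕ :=
  (G.filter (fun e => e.1 ∈ S ∧ e.2 ∉ S)).card

/-- Volume of a vertex set. -/
def vol (G : Multiset (V × V)) (S : Finset V) : ℕ := ∑ v ∈ S, deg G v

omit [Fintype V] in
theorem cutE_mono {W W' : Multiset (V × V)} (h : W ≤ W') (S : Finset V) :
    cutE W S ≤ cutE W' S :=
  Multiset.card_le_card (Multiset.filter_le_filter _ h)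

theorem stmt9_general (W W' : Multiset (V × V)) (hsub : W ≤ W') (S : Finset V)
    (r r' : V → ℕ) (ψ : ℝ) (hψ0 : 0 < ψ)
    (ha : ψ * ((vol W S : ℝ) + ∑ v ∈ S, (r v : ℝ)) ≤ (cutE W S : ℝ) + ∑ v ∈ S, (r v : ℝ))
    (hr : (1 / 2) * (∑ v ∈ S, (r v : ℝ)) < ∑ v ∈ S, (r' v : ℝ))
    (hvol : (ψ / 3) * ((vol W' S : ℝ) + ∑ v ∈ S, (r' v : ℝ))
      ≤ (vol W S : ℝ) + ∑ v ∈ S, (r v : ℝ)) :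
    (ψ ^ 2 / 6) * ((vol W' S : ℝ) + ∑ v ∈ S, (r' v : ℝ))
      ≤ (cutE W' S : ℝ) + ∑ v ∈ S, (r' v : ℝ) := by
  have hcut : (cutE W S : ℝ) ≤ cutE W' S := by exact_mod_cast cutE_mono hsub S
  have hcut_nonneg : (0 : ℝ) ≤ cutE W S := Nat.cast_nonneg _
  calc (ψ ^ 2 / 6) * ((vol W' S : ℝ) + ∑ v ∈ S, (r' v : ℝ))
      = ψ / 2 * ((ψ / 3) * ((vol W' S : ℝ) + ∑ v ∈ S, (r' v : ℝ))) := by ring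
    _ ≤ ψ / 2 * ((vol W S : ℝ) + ∑ v ∈ S, (r v : ℝ)) := by gcongr
    _ ≤ ((cutE W S : ℝ) + ∑ v ∈ S, (r v : ℝ)) / 2 := by linarith
    _ ≤ (cutE W' S : ℝ) + ∑ v ∈ S, (r' v : ℝ) := by linarith

/-- Witness repair, second case: if `W ⊆ W'`, `|E_W(S,S̄)| + r(S) ≥ ψ(vol_W(S)+r(S))`,
`r'(S) > (1/2)r(S)`, and `vol_W(S)+r(S) ≥ (ψ/3)(vol_{W'}(S)+r'(S))`, then
`|E_{W'}(S,S̄)| + r'(S) ≥ (ψ²/6)(vol_{W'}(S)+r'(S))`. -/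
theorem stmt9 (W W' : Multiset (V × V)) (hsub : W ≤ W') (S : Finset V)
    (r r' : V → ℕ) (ψ : ℝ) (hψ0 : 0 < ψ) (hψ1 : ψ < 1)
    (ha : ψ * ((vol W S : ℝ) + ∑ v ∈ S, (r v : ℝ)) ≤ (cutE W S : ℝ) + ∑ v ∈ S, (r v : ℝ))
    (hr : (1 / 2) * (∑ v ∈ S, (r v : ℝ)) < ∑ v ∈ S, (r' v : ℝ))
    (hvol : (ψ / 3) * ((vol W' S : ℝ) + ∑ v ∈ S, (r' v : ℝ))
      ≤ (vol W S : ℝ) + ∑ v ∈ S, (r v : ℝ)) :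
    (ψ ^ 2 / 6) * ((vol W' S : ℝ) + ∑ v ∈ S, (r' v : ℝ))
      ≤ (cutE W' S : ℝ) + ∑ v ∈ S, (r' v : ℝ) :=
  stmt9_general W W' hsub S r r' ψ hψ0 ha hr hvol
end

section
/- Let W₁ and W₂ be directed multigraphs on vertex set V such that W₁ is a ψ̂-out-witness certificate in the sense that for every cut (S,S̄) with γ(S) ≤ γ(S̄), |E_{W₁}(S,S̄)| + r₁(S) ≥ ψ̂(vol_{W₁}(S) + r₁(S)), and W₂ satisfies the analogous property in the reversed direction with r₂. Suppose additionally that for every vertex v, deg_{W₂}(v) + r₂(v) ≤ (1/ψ̂)(deg_{W₁}(v) + r₁(v)). Let W = W₁ ∪ W₂ (disjoint union of edge multisets) and r = r₁ + r₂. Then for every cut (S,S̄) with γ(S) ≤ γ(S̄), |E_W(S,S̄)| + r(S) ≥ (ψ̂²/2)(vol_W(S) + r(S)). -/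
open Finset

variable {V : Type*} [Fintype V] [DecidableEq V]

/-- The reversed multigraph. -/
def rev (G : Multiset (V × V)) : Multiset (V × V) := G.map Prod.swap

/-- Combining a forward out-witness certificate `W₁` (with demands `r₁`) and a reverse
out-witness certificate `W₂` (with demands `r₂`, in the reversed direction) such that
`deg_{W₂}(v)+r₂(v) ≤ (1/ψ̂)(deg_{W₁}(v)+r₁(v))` for all `v`: the union `W = W₁ ∪ W₂` with
`r = r₁ + r₂` satisfies, for every cut with `γ(S) ≤ γ(S̄)`,
`|E_W(S,S̄)| + r(S) ≥ (ψ̂²/2)(vol_W(S)+r(S))`. -/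
theorem stmt11 (W₁ W₂ : Multiset (V × V)) (r₁ r₂ γ : V → ℕ) (ψ : ℝ)
    (hψ0 : 0 < ψ) (hψ1 : ψ < 1)
    (h1 : ∀ S : Finset V, (∑ v ∈ S, γ v) ≤ (∑ v ∈ Sᶜ, γ v) →
      ψ * ((vol W₁ S : ℝ) + ∑ v ∈ S, (r₁ v : ℝ)) ≤ (cutE W₁ S : ℝ) + ∑ v ∈ S, (r₁ v : ℝ))
    (h2 : ∀ S : Finset V, (∑ v ∈ S, γ v) ≤ (∑ v ∈ Sᶜ, γ v) →
      ψ * ((vol W₂ S : ℝ) + ∑ v ∈ S, (r₂ v : ℝ))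
        ≤ (cutE (rev W₂) S : ℝ) + ∑ v ∈ S, (r₂ v : ℝ))
    (hdeg : ∀ v, (deg W₂ v : ℝ) + (r₂ v : ℝ) ≤ (1 / ψ) * ((deg W₁ v : ℝ) + (r₁ v : ℝ))) :
    ∀ S : Finset V, (∑ v ∈ S, γ v) ≤ (∑ v ∈ Sᶜ, γ v) →
      (ψ ^ 2 / 2) * ((vol (W₁ + W₂) S : ℝ) + ∑ v ∈ S, ((r₁ v : ℝ) + (r₂ v : ℝ)))
        ≤ (cutE (W₁ + W₂) S : ℝ) + ∑ v ∈ S, ((r₁ v : ℝ) + (r₂ v : ℝ)) := by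
  intro S hS
  have hvol : (vol (W₁ + W₂) S : ℝ) = (vol W₁ S : ℝ) + (vol W₂ S : ℝ) := by
    unfold vol deg
    push_cast
    rw [← Finset.sum_add_distrib]
    refine Finset.sum_congr rfl fun v _ => ?_
    simp [Multiset.filter_add]
    ring
  have hcut : (cutE W₁ S : ℝ) ≤ (cutE (W₁ + W₂) S : ℝ) := by
    unfold cutE
    have : (W₁.filter (fun e => e.1 ∈ S ∧ e.2 ∉ S)).card ≤
        ((W₁ + W₂).filter (fun e => e.1 ∈ S ∧ e.2 ∉ S)).card := by
      rw [Multiset.filter_add, Multiset.card_add]; omega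
    exact_mod_cast this
  have hB : (vol W₂ S : ℝ) + ∑ v ∈ S, (r₂ v : ℝ)
      ≤ (1 / ψ) * ((vol W₁ S : ℝ) + ∑ v ∈ S, (r₁ v : ℝ)) := by
    unfold vol
    push_cast
    rw [← Finset.sum_add_distrib, ← Finset.sum_add_distrib, Finset.mul_sum]
    exact Finset.sum_le_sum fun v _ => hdeg v
  have hA : 0 ≤ (vol W₁ S : ℝ) + ∑ v ∈ S, (r₁ v : ℝ) := by
    positivity
  have h1S := h1 S hS
  have hsplit : ∑ v ∈ S, ((r₁ v : ℝ) + (r₂ v : ℝ))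
      = (∑ v ∈ S, (r₁ v : ℝ)) + ∑ v ∈ S, (r₂ v : ℝ) := Finset.sum_add_distrib
  have hr2 : 0 ≤ ∑ v ∈ S, (r₂ v : ℝ) := by positivity
  rw [hvol, hsplit]
  have hB' : ψ * ((vol W₂ S : ℝ) + ∑ v ∈ S, (r₂ v : ℝ))
      ≤ (vol W₁ S : ℝ) + ∑ v ∈ S, (r₁ v : ℝ) := by
    have := mul_le_mul_of_nonneg_left hB hψ0.le
    rwa [← mul_assoc, mul_one_div_cancel hψ0.ne', one_mul] at this
  nlinarith [mul_le_mul_of_nonneg_left hB' hψ0.le, h1S, hA, hcut, hr2,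
    mul_nonneg hψ0.le hA, mul_le_mul_of_nonneg_right hψ1.le (mul_nonneg hψ0.le hA)]
end
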